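/- arXiv:1903.08162 — 2 statements merged into one kernel-verified Lean document; each statement's English description precedes it below -/
import Mathlib

section
/- For every complex ν, the k-th derivative of the Hermite function satisfies d^k/dx^k H_ν(x) = 2^k (−1)^k (−ν)_k H_{ν−k}(x), i.e. d^k/dx^k H_ν(x) = 2^k ν(ν−1)⋯(ν−k+1) H_{ν−k}(x). -/
/-- Pochhammer symbol `(x)_k` (rising factorial). -/
noncomputable def ascp (x : ℂ) (k : ℕ) : ℂ := (ascPochhammer ℂ k).eval x

/-- Kummer confluent hypergeometric function `₁F₁(a; b; x)`. -/
noncomputable def F11 (a b x : ℂ) : ℂ :=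
  ∑' k : ℕ, ascp a k / ascp b k * x ^ k / (Nat.factorial k : ℂ)

/-- Hermite function of complex degree `ν`. -/
noncomputable def HermiteF (ν x : ℂ) : ℂ :=
  (2 : ℂ) ^ ν * (Real.sqrt Real.pi : ℂ) *
    (F11 (-ν / 2) (1 / 2) (x ^ 2) / Complex.Gamma ((1 - ν) / 2)
      - 2 * x * F11 ((1 - ν) / 2) (3 / 2) (x ^ 2) / Complex.Gamma (-ν / 2))

/-!
Term-by-term differentiation of the entire series gives
`d/dz ₁F₁(a; b; z) = (a / b) ₁F₁(a + 1; b + 1; z)`, and comparing coefficients gives the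
contiguous relation `₁F₁(a; b; z) - ₁F₁(a; b + 1; z) = a z / (b (b + 1)) ₁F₁(a + 1; b + 2; z)`.
Differentiating the definition of `H_ν` with these two facts (for `b = 1/2` and `b = 3/2`) and
`1 / Γ(s) = s / Γ(s + 1)` gives `H_ν' = 2ν H_{ν-1}`, which iterates to the formula; finally
`(-ν)_k = (-1)^k ν (ν - 1) ⋯ (ν - k + 1)`.
-/

open Finset
open scoped Nat NNReal

theorem hasDerivAt_tsum_mul_pow {𝕜 : Type*} [RCLike 𝕜] {c : ℕ → 𝕜}
    (hc : ∀ r : ℝ≥0, Summable fun k => ‖c k‖ * (r : ℝ) ^ k) (x : 𝕜) :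
    HasDerivAt (fun z => ∑' k, c k * z ^ k) (∑' k, (k + 1) * c (k + 1) * x ^ k) x := by
  set R : ℝ≥0 := ‖x‖₊ + 1
  have hR : (1 : ℝ) ≤ R := by simp [R]
  have hx : x ∈ Metric.ball (0 : 𝕜) R := by simp [R]
  have hbound : ∀ k : ℕ, ∀ y ∈ Metric.ball (0 : 𝕜) R,
      ‖c k * ((k : 𝕜) * y ^ (k - 1))‖ ≤ ‖c k‖ * ((2 * R : ℝ≥0) : ℝ) ^ k := by
    intro k y hy
    rw [mem_ball_zero_iff] at hy
    have hk : (k : ℝ) ≤ 2 ^ k := mod_cast Nat.lt_two_pow_self.le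
    have hy' : ‖y‖ ^ (k - 1) ≤ (R : ℝ) ^ k :=
      (pow_le_pow_left₀ (norm_nonneg y) hy.le _).trans (pow_le_pow_right₀ hR (Nat.sub_le k 1))
    calc ‖c k * ((k : 𝕜) * y ^ (k - 1))‖ = ‖c k‖ * (k * ‖y‖ ^ (k - 1)) := by
          simp only [norm_mul, norm_pow, RCLike.norm_natCast]
      _ ≤ ‖c k‖ * (2 ^ k * (R : ℝ) ^ k) := by gcongr
      _ = ‖c k‖ * ((2 * R : ℝ≥0) : ℝ) ^ k := by push_cast; ring
  have hsum0 : Summable fun k => c k * (0 : 𝕜) ^ k :=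
    .of_norm_bounded (hc 0) fun k => by simp
  have hderiv := hasDerivAt_tsum_of_isPreconnected (hc (2 * R)) Metric.isOpen_ball
    (convex_ball (0 : 𝕜) R).isPreconnected
    (fun k y _ => (hasDerivAt_pow k y).const_mul (c k)) hbound (Metric.mem_ball_self (by positivity))
    hsum0 hx
  refine hderiv.congr_deriv ?_
  rw [Summable.tsum_eq_zero_add (.of_norm_bounded (hc (2 * R)) fun k => hbound k x hx)]
  simp only [CharP.cast_eq_zero, zero_mul, mul_zero, zero_add, Nat.cast_add, Nat.cast_one,
    Nat.add_sub_cancel]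
  exact tsum_congr fun k => by ring

theorem ascp_succ_left (x : ℂ) (k : ℕ) : ascp x (k + 1) = x * ascp (x + 1) k := by
  simp [ascp, ascPochhammer_succ_left, Polynomial.eval_comp]

theorem ascp_succ_right (x : ℂ) (k : ℕ) : ascp x (k + 1) = ascp x k * (x + k) :=
  ascPochhammer_succ_eval k x

theorem ascp_neg (ν : ℂ) (k : ℕ) : ascp (-ν) k = (-1) ^ k * ∏ j ∈ range k, (ν - j) := by
  rw [ascp, ascPochhammer_eval_neg_eq_descPochhammer, descPochhammer_eval_eq_prod_range]

theorem ne_neg_natCast_of_re_pos {b : ℂ} (hb : 0 < b.re) (n : ℕ) : b ≠ -n := by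
  rintro rfl
  simp only [Complex.neg_re, Complex.natCast_re, Left.neg_pos_iff] at hb
  exact (Nat.cast_nonneg n).not_gt hb

theorem add_one_ne_neg_natCast {b : ℂ} (hb : ∀ n : ℕ, b ≠ -n) (n : ℕ) : b + 1 ≠ -n := by
  simpa [eq_sub_iff_add_eq, add_comm, ← sub_eq_add_neg] using hb (n + 1)

theorem ascp_ne_zero {b : ℂ} (hb : ∀ n : ℕ, b ≠ -n) (k : ℕ) : ascp b k ≠ 0 := by
  simp only [ascp, ne_eq, ascPochhammer_eval_eq_zero_iff, not_exists, not_and]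
  exact fun n _ h => hb n (by rw [h, neg_neg])

noncomputable def F11Coeff (a b : ℂ) (k : ℕ) : ℂ := ascp a k / ascp b k / k !

theorem F11_eq_tsum (a b x : ℂ) : F11 a b x = ∑' k, F11Coeff a b k * x ^ k :=
  tsum_congr fun k => by rw [F11Coeff]; ring

theorem F11Coeff_eq_Gamma_mul_regularizedHGFunCoeff (a : ℂ) {b : ℂ} (hb : ∀ n : ℕ, b ≠ -n)
    (k : ℕ) : F11Coeff a b k = Complex.Gamma b * Complex.regularizedHGFunCoeff {a} {b} k := by
  have hΓ := Complex.Gamma_ne_zero hb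
  simp only [F11Coeff, ascp, Complex.regularizedHGFunCoeff, Multiset.map_singleton,
    Multiset.prod_singleton, ← Complex.Gamma_add_nat_div_Gamma_eq b hb]
  field_simp

theorem summable_norm_F11Coeff_mul_pow (a : ℂ) {b : ℂ} (hb : ∀ n : ℕ, b ≠ -n) (r : ℝ≥0) :
    Summable fun k => ‖F11Coeff a b k‖ * (r : ℝ) ^ k := by
  have h := (Complex.regularizedHGFunSeries {a} {b}).summable_norm_mul_pow (r := r)
    (by simp [Complex.radius_regularizedHGFunSeries_eq_top])
  simpa [Complex.regularizedHGFunSeries, F11Coeff_eq_Gamma_mul_regularizedHGFunCoeff a hb,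
    mul_assoc] using h.mul_left ‖Complex.Gamma b‖

theorem summable_F11Coeff_mul_pow (a : ℂ) {b : ℂ} (hb : ∀ n : ℕ, b ≠ -n) (z : ℂ) :
    Summable fun k => F11Coeff a b k * z ^ k :=
  .of_norm_bounded (summable_norm_F11Coeff_mul_pow a hb ‖z‖₊) fun k => by simp

theorem F11Coeff_succ (a : ℂ) {b : ℂ} (hb : ∀ n : ℕ, b ≠ -n) (k : ℕ) :
    (k + 1) * F11Coeff a b (k + 1) = a / b * F11Coeff (a + 1) (b + 1) k := by
  have hb0 : b ≠ 0 := by simpa using hb 0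
  have := ascp_ne_zero (add_one_ne_neg_natCast hb) k
  simp only [F11Coeff, ascp_succ_left, Nat.factorial_succ, Nat.cast_mul, Nat.cast_add_one]
  field_simp

theorem hasDerivAt_F11 (a : ℂ) {b : ℂ} (hb : ∀ n : ℕ, b ≠ -n) (x : ℂ) :
    HasDerivAt (F11 a b) (a / b * F11 (a + 1) (b + 1) x) x := by
  have h := hasDerivAt_tsum_mul_pow (summable_norm_F11Coeff_mul_pow a hb) x
  simp only [F11Coeff_succ a hb, mul_assoc, tsum_mul_left, ← F11_eq_tsum] at h
  exact (funext (F11_eq_tsum a b)) ▸ h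

theorem F11Coeff_sub_F11Coeff_add_one (a : ℂ) {b : ℂ} (hb : ∀ n : ℕ, b ≠ -n) (n : ℕ) :
    F11Coeff a b (n + 1) - F11Coeff a (b + 1) (n + 1)
      = a / (b * (b + 1)) * F11Coeff (a + 1) (b + 2) n := by
  have hb0 : b ≠ 0 := by simpa using hb 0
  have hb1 := add_one_ne_neg_natCast hb
  have hb10 : b + 1 ≠ 0 := by simpa using hb1 0
  have hbn : b + 1 + n ≠ 0 := by simpa [add_eq_zero_iff_eq_neg] using hb1 n
  have hP := ascp_ne_zero hb1 n
  have hshift : ascp (b + 1) n * (b + 1 + n) = (b + 1) * ascp (b + 2) n := by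
    rw [← ascp_succ_right, ascp_succ_left, add_assoc, one_add_one_eq_two]
  have hQ : ascp (b + 2) n ≠ 0 := by
    intro h; rw [h, mul_zero] at hshift; exact mul_ne_zero hP hbn hshift
  rw [F11Coeff, F11Coeff, F11Coeff, ascp_succ_left b, ascp_succ_right (b + 1), ascp_succ_left a,
    Nat.factorial_succ, Nat.cast_mul, Nat.cast_add_one]
  have hf : (n ! : ℂ) ≠ 0 := Nat.cast_ne_zero.mpr n.factorial_ne_zero
  have hn1 : (n : ℂ) + 1 ≠ 0 := Nat.cast_add_one_ne_zero n
  field_simp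
  linear_combination -(a * ascp (a + 1) n * (n + 1)) * hshift

theorem F11_sub_F11_add_one (a : ℂ) {b : ℂ} (hb : ∀ n : ℕ, b ≠ -n) (z : ℂ) :
    F11 a b z - F11 a (b + 1) z = a / (b * (b + 1)) * z * F11 (a + 1) (b + 2) z := by
  have hb1 := add_one_ne_neg_natCast hb
  rw [F11_eq_tsum, F11_eq_tsum, F11_eq_tsum, ← Summable.tsum_sub
    (summable_F11Coeff_mul_pow a hb z) (summable_F11Coeff_mul_pow a hb1 z),
    Summable.tsum_eq_zero_add
      ((summable_F11Coeff_mul_pow a hb z).sub (summable_F11Coeff_mul_pow a hb1 z))]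
  have h0 : F11Coeff a b 0 - F11Coeff a (b + 1) 0 = 0 := by simp [F11Coeff, ascp]
  simp only [← sub_mul, F11Coeff_sub_F11Coeff_add_one a hb, h0, zero_mul, zero_add, pow_succ]
  rw [← tsum_mul_left]
  exact tsum_congr fun k => by ring

/-- Valid at the poles too, where `Complex.Gamma` takes the value `0`. -/
theorem inv_Gamma_eq_mul_inv_Gamma_add_one (s : ℂ) :
    (Complex.Gamma s)⁻¹ = s * (Complex.Gamma (s + 1))⁻¹ := by
  rcases eq_or_ne s 0 with rfl | hs
  · simp [Complex.Gamma_zero]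
  rw [Complex.Gamma_add_one s hs, mul_inv, ← mul_assoc]
  rcases eq_or_ne (Complex.Gamma s) 0 with hΓ | hΓ
  · simp [hΓ]
  · rw [mul_inv_cancel₀ hs, one_mul]

theorem hasDerivAt_HermiteF (ν x : ℂ) :
    HasDerivAt (HermiteF ν) (2 * ν * HermiteF (ν - 1) x) x := by
  have hhalf : ∀ n : ℕ, (1 / 2 : ℂ) ≠ -n := ne_neg_natCast_of_re_pos (by norm_num)
  have hsq : HasDerivAt (fun y : ℂ => y ^ 2) (2 * x) x := by simpa using hasDerivAt_pow 2 x
  have hF₁ := (hasDerivAt_F11 (-ν / 2) hhalf (x ^ 2)).comp x hsq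
  have hF₂ := (hasDerivAt_F11 ((1 - ν) / 2) (ne_neg_natCast_of_re_pos (b := 3 / 2) (by norm_num))
    (x ^ 2)).comp x hsq
  have h := ((hF₁.div_const (Complex.Gamma ((1 - ν) / 2))).sub
    ((((hasDerivAt_id x).const_mul 2).mul hF₂).div_const (Complex.Gamma (-ν / 2)))).const_mul
      ((2 : ℂ) ^ ν * (Real.sqrt Real.pi : ℂ))
  refine h.congr_deriv ?_
  have hcontig := F11_sub_F11_add_one ((1 - ν) / 2) hhalf (x ^ 2)
  have hΓ := inv_Gamma_eq_mul_inv_Gamma_add_one (-ν / 2)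
  have hpow : (2 : ℂ) ^ (ν - 1) = 2 ^ ν / 2 := by
    rw [Complex.cpow_sub _ _ two_ne_zero, Complex.cpow_one]
  rw [HermiteF, hpow, show -(ν - 1) / 2 = (1 - ν) / 2 by ring,
    show (1 - (ν - 1)) / 2 = -ν / 2 + 1 by ring]
  norm_num at hcontig ⊢
  rw [sub_eq_iff_eq_add.mp hcontig]
  simp only [div_eq_mul_inv] at hΓ ⊢
  rw [hΓ]
  ring

theorem iteratedDeriv_HermiteF (ν : ℂ) (k : ℕ) :
    iteratedDeriv k (HermiteF ν)
      = fun x => 2 ^ k * (∏ j ∈ range k, (ν - j)) * HermiteF (ν - k) x := by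
  induction k with
  | zero => ext; simp
  | succ k ih =>
    ext x
    rw [iteratedDeriv_succ, ih, deriv_const_mul_field']
    beta_reduce
    rw [(hasDerivAt_HermiteF _ x).deriv, prod_range_succ, Nat.cast_add_one, sub_add_eq_sub_sub]
    ring

/-- `dᵏ/dxᵏ H_ν(x) = 2ᵏ (−1)ᵏ (−ν)_k H_{ν−k}(x) = 2ᵏ ν(ν−1)⋯(ν−k+1) H_{ν−k}(x)`. -/
theorem hermite_iterated_deriv (ν : ℂ) (k : ℕ) (x : ℂ) :
    iteratedDeriv k (HermiteF ν) x
      = 2 ^ k * (-1) ^ k * ascp (-ν) k * HermiteF (ν - k) x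
    ∧ iteratedDeriv k (HermiteF ν) x
      = 2 ^ k * (∏ j ∈ Finset.range k, (ν - j)) * HermiteF (ν - k) x := by
  have hsign : ((-1 : ℂ) ^ k) * (-1) ^ k = 1 := by rw [← mul_pow, neg_one_mul, neg_neg, one_pow]
  rw [iteratedDeriv_HermiteF, ascp_neg]
  refine ⟨?_, rfl⟩
  linear_combination (-(2 ^ k * (∏ j ∈ range k, (ν - j)) * HermiteF (ν - k) x)) * hsign
end

section
/- Let b₀, b₁, b₂ ∈ ℂ with b₂ ≠ 0 and let λ₁, λ₂ be the roots of b₂·λ(λ+1)/(α₁(α₁+1)) − (b₁+2b₂)·λ/α₁ + (b₀+b₁+b₂) = 0, neither of which is a nonpositive integer. Then Σ_{n=0}^2 b_n ₚF_q(α₁+n, α₂,…,αₚ; γ; z) = (b₀+b₁+b₂)·ₚ₊₂F_{q+2}(α₁,…,αₚ, λ₁+1, λ₂+1; γ₁,…,γ_q, λ₁, λ₂; z). -/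
/-- The generalized hypergeometric function `ₚF_q(a; b; z)` as a formal power series:
its `k`-th coefficient is `(a₁)_k ⋯ (aₚ)_k / ((b₁)_k ⋯ (b_q)_k k!)`. -/
noncomputable def pFq (a b : List ℂ) : PowerSeries ℂ :=
  PowerSeries.mk fun k =>
    (a.map fun x => ascp x k).prod / ((b.map fun x => ascp x k).prod * (Nat.factorial k : ℂ))

/-!
Coefficientwise, each `ₚF_q(α₁ + n, …)` is `ₚF_q(α₁, …)` times a polynomial in `k` of degree `n`,
namely `(α₁ + k)/α₁` and `(α₁ + k)(α₁ + 1 + k)/(α₁(α₁ + 1))`; so the combination is `ₚF_q(α₁, …)`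
times a quadratic in `k`, which is the quadratic of the statement evaluated at `λ = -k`. Its
factorisation `(λ₁ + k)(λ₂ + k)` up to a constant is exactly the ratio
`(λ₁ + 1)_k (λ₂ + 1)_k / ((λ₁)_k (λ₂)_k)` contributed by the two extra parameter pairs.
-/

lemma ne_zero_of_forall_ne_neg_natCast {x : ℂ} (hx : ∀ m : ℕ, x ≠ -(m : ℂ)) : x ≠ 0 :=
  fun h => hx 0 (by simp [h])

lemma ascp_ne_zero_s12 {x : ℂ} (hx : ∀ m : ℕ, x ≠ -(m : ℂ)) (k : ℕ) : ascp x k ≠ 0 := by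
  rintro h
  obtain ⟨m, -, hm⟩ := (ascPochhammer_eval_eq_zero_iff k x).mp h
  exact hx m (by rw [hm, neg_neg])

lemma mul_ascp_add_one (x : ℂ) (k : ℕ) : x * ascp (x + 1) k = ascp x k * (x + k) := by
  have h := congrArg (Polynomial.eval x) (ascPochhammer_succ_left ℂ k)
  rw [ascPochhammer_succ_eval] at h
  simpa [ascp, Polynomial.eval_comp] using h.symm

lemma ascp_add_one {x : ℂ} (hx : x ≠ 0) (k : ℕ) :
    ascp (x + 1) k = ascp x k * ((x + k) / x) := by
  rw [← mul_div_assoc, eq_div_iff hx, mul_comm, mul_ascp_add_one]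

lemma ascp_add_two {x : ℂ} (hx : x ≠ 0) (hx' : x + 1 ≠ 0) (k : ℕ) :
    ascp (x + 2) k = ascp x k * ((x + k) * (x + 1 + k) / (x * (x + 1))) := by
  rw [show x + 2 = x + 1 + 1 by ring, ascp_add_one hx', ascp_add_one hx]
  field_simp

lemma ascp_add_one_div_ascp {x : ℂ} (hx : ∀ m : ℕ, x ≠ -(m : ℂ)) (k : ℕ) :
    ascp (x + 1) k / ascp x k = (x + k) / x := by
  rw [ascp_add_one (ne_zero_of_forall_ne_neg_natCast hx),
    mul_div_cancel_left₀ _ (ascp_ne_zero_s12 hx k)]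

lemma coeff_pFq_cons (a : ℂ) (as bs : List ℂ) (k : ℕ) :
    PowerSeries.coeff k (pFq (a :: as) bs) = ascp a k * PowerSeries.coeff k (pFq as bs) := by
  simp only [pFq, PowerSeries.coeff_mk, List.map_cons, List.prod_cons, mul_div_assoc]

lemma coeff_pFq_append (as bs cs ds : List ℂ) (k : ℕ) :
    PowerSeries.coeff k (pFq (as ++ cs) (bs ++ ds)) =
      PowerSeries.coeff k (pFq as bs) *
        ((cs.map fun x => ascp x k).prod / (ds.map fun x => ascp x k).prod) := by
  simp only [pFq, PowerSeries.coeff_mk, List.map_append, List.prod_append]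
  ring

lemma three_term_weight_eq {α b₀ b₁ b₂ l₁ l₂ : ℂ} (hα : α ≠ 0) (hα' : α + 1 ≠ 0)
    (hl₁ : l₁ ≠ 0) (hl₂ : l₂ ≠ 0)
    (hroots : ∀ l : ℂ,
      b₂ * (l * (l + 1)) / (α * (α + 1)) - (b₁ + 2 * b₂) * l / α + (b₀ + b₁ + b₂)
        = b₂ / (α * (α + 1)) * ((l - l₁) * (l - l₂)))
    (x : ℂ) :
    b₀ + b₁ * ((α + x) / α) + b₂ * ((α + x) * (α + 1 + x) / (α * (α + 1)))
      = (b₀ + b₁ + b₂) * ((l₁ + x) / l₁ * ((l₂ + x) / l₂)) := by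
  have at_neg_x := hroots (-x)
  have at_zero := hroots 0
  field_simp at at_neg_x at_zero ⊢
  linear_combination l₁ * l₂ * at_neg_x - (l₁ + x) * (l₂ + x) * at_zero

theorem pFq_three_term_combination_general (α₁ : ℂ) (αs γs : List ℂ) (b₀ b₁ b₂ : ℂ)
    (hα : ∀ m : ℕ, α₁ ≠ -(m : ℂ)) (hα' : ∀ m : ℕ, α₁ + 1 ≠ -(m : ℂ))
    (l₁ l₂ : ℂ)
    (hroots : ∀ l : ℂ,
      b₂ * (l * (l + 1)) / (α₁ * (α₁ + 1)) - (b₁ + 2 * b₂) * l / α₁ + (b₀ + b₁ + b₂)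
        = b₂ / (α₁ * (α₁ + 1)) * ((l - l₁) * (l - l₂)))
    (hl₁ : ∀ m : ℕ, l₁ ≠ -(m : ℂ)) (hl₂ : ∀ m : ℕ, l₂ ≠ -(m : ℂ)) :
    PowerSeries.C b₀ * pFq (α₁ :: αs) γs + PowerSeries.C b₁ * pFq ((α₁ + 1) :: αs) γs
        + PowerSeries.C b₂ * pFq ((α₁ + 2) :: αs) γs
      = PowerSeries.C (b₀ + b₁ + b₂)
          * pFq ((α₁ :: αs) ++ [l₁ + 1, l₂ + 1]) (γs ++ [l₁, l₂]) := by
  have hα₀ := ne_zero_of_forall_ne_neg_natCast hα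
  have hα₁ := ne_zero_of_forall_ne_neg_natCast hα'
  ext k
  have weight := three_term_weight_eq hα₀ hα₁ (ne_zero_of_forall_ne_neg_natCast hl₁)
    (ne_zero_of_forall_ne_neg_natCast hl₂) hroots k
  have ratio : ascp (l₁ + 1) k * ascp (l₂ + 1) k / (ascp l₁ k * ascp l₂ k)
      = (l₁ + k) / l₁ * ((l₂ + k) / l₂) := by
    rw [mul_div_mul_comm, ascp_add_one_div_ascp hl₁, ascp_add_one_div_ascp hl₂]
  simp only [map_add (PowerSeries.coeff k), PowerSeries.coeff_C_mul, coeff_pFq_append,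
    coeff_pFq_cons, ascp_add_one hα₀, ascp_add_two hα₀ hα₁, List.map_cons, List.map_nil,
    List.prod_cons, List.prod_nil, mul_one, ratio]
  linear_combination ascp α₁ k * PowerSeries.coeff k (pFq αs γs) * weight

/-- three-term contiguous combination as a single `ₚ₊₂F_{q+2}`, where
`λ₁, λ₂` are the roots of `b₂ λ(λ+1)/(α₁(α₁+1)) − (b₁+2b₂) λ/α₁ + (b₀+b₁+b₂) = 0`. -/
theorem pFq_three_term_combination (α₁ : ℂ) (αs γs : List ℂ) (b₀ b₁ b₂ : ℂ) (hb₂ : b₂ ≠ 0)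
    (hα : ∀ m : ℕ, α₁ ≠ -(m : ℂ)) (hα' : ∀ m : ℕ, α₁ + 1 ≠ -(m : ℂ))
    (hγ : ∀ γ ∈ γs, ∀ m : ℕ, γ ≠ -(m : ℂ)) (l₁ l₂ : ℂ)
    (hroots : ∀ l : ℂ,
      b₂ * (l * (l + 1)) / (α₁ * (α₁ + 1)) - (b₁ + 2 * b₂) * l / α₁ + (b₀ + b₁ + b₂)
        = b₂ / (α₁ * (α₁ + 1)) * ((l - l₁) * (l - l₂)))
    (hl₁ : ∀ m : ℕ, l₁ ≠ -(m : ℂ)) (hl₂ : ∀ m : ℕ, l₂ ≠ -(m : ℂ)) :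
    PowerSeries.C b₀ * pFq (α₁ :: αs) γs + PowerSeries.C b₁ * pFq ((α₁ + 1) :: αs) γs
        + PowerSeries.C b₂ * pFq ((α₁ + 2) :: αs) γs
      = PowerSeries.C (b₀ + b₁ + b₂)
          * pFq ((α₁ :: αs) ++ [l₁ + 1, l₂ + 1]) (γs ++ [l₁, l₂]) :=
  pFq_three_term_combination_general α₁ αs γs b₀ b₁ b₂ hα hα' l₁ l₂ hroots hl₁ hl₂
end
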